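/- arXiv:1301.5607 — 6 statements merged into one kernel-verified Lean document; each statement's English description precedes it below -/
import Mathlib

section
/- (Non-empty dit sets intersect) If π and σ are partitions of U with dit(π) ≠ ∅ and dit(σ) ≠ ∅, then dit(π) ∩ dit(σ) ≠ ∅. -/
open Finset

variable {U : Type*} [DecidableEq U] [Fintype U]

/-- The dit set of a partition: ordered pairs whose coordinates lie in no common block. -/
def dit (π : Finpartition (univ : Finset U)) : Finset (U × U) :=
  univ.filter fun p => ∀ B ∈ π.parts, ¬ (p.1 ∈ B ∧ p.2 ∈ B)

def rel (π : Finpartition (univ : Finset U)) (u v : U) : Prop :=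
  ∃ B ∈ π.parts, u ∈ B ∧ v ∈ B

lemma mem_dit {π : Finpartition (univ : Finset U)} {u v : U} :
    (u, v) ∈ dit π ↔ ¬ rel π u v := by
  simp [dit, rel]

lemma rel_refl (π : Finpartition (univ : Finset U)) (u : U) : rel π u u := by
  obtain ⟨B, hB, hu⟩ := π.exists_mem (mem_univ u)
  exact ⟨B, hB, hu, hu⟩

lemma rel_symm {π : Finpartition (univ : Finset U)} {u v : U} (h : rel π u v) : rel π v u := by
  obtain ⟨B, hB, hu, hv⟩ := h
  exact ⟨B, hB, hv, hu⟩

lemma rel_trans {π : Finpartition (univ : Finset U)} {u v w : U}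
    (h1 : rel π u v) (h2 : rel π v w) : rel π u w := by
  obtain ⟨B, hB, hu, hv⟩ := h1
  obtain ⟨C, hC, hv', hw⟩ := h2
  cases π.eq_of_mem_parts hB hC hv hv'
  exact ⟨B, hB, hu, hw⟩

theorem stmt4 (π σ : Finpartition (univ : Finset U))
    (hπ : dit π ≠ ∅) (hσ : dit σ ≠ ∅) : dit π ∩ dit σ ≠ ∅ := by
  rw [← nonempty_iff_ne_empty] at hπ hσ ⊢
  obtain ⟨⟨u, v⟩, huv⟩ := hπ
  obtain ⟨⟨x, y⟩, hxy⟩ := hσ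
  rw [mem_dit] at huv hxy
  by_contra h
  rw [not_nonempty_iff_eq_empty, eq_empty_iff_forall_notMem] at h
  -- dit π ⊆ indit σ
  have key : ∀ a b : U, ¬ rel σ a b → rel π a b := by
    intro a b hab
    by_contra hp
    exact h (a, b) (mem_inter.2 ⟨mem_dit.2 hp, mem_dit.2 hab⟩)
  have huvσ : rel σ u v := by
    by_contra hc
    exact h (u, v) (mem_inter.2 ⟨mem_dit.2 huv, mem_dit.2 hc⟩)
  -- one of x, y is not σ-related to u
  have : ¬ rel σ u x ∨ ¬ rel σ u y := by
    by_contra hc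
    push_neg at hc
    exact hxy (rel_trans (rel_symm hc.1) hc.2)
  obtain hw | hw := this
  · have h1 : rel π u x := key u x hw
    have h2 : rel π v x := key v x (fun hc => hw (rel_trans huvσ hc))
    exact huv (rel_trans h1 (rel_symm h2))
  · have h1 : rel π u y := key u y hw
    have h2 : rel π v y := key v y (fun hc => hw (rel_trans huvσ hc))
    exact huv (rel_trans h1 (rel_symm h2))
end

section
/- If E₁ and E₂ are equivalence relations on a set U with E₁ ∪ E₂ = U×U, then E₁ = U×U or E₂ = U×U. -/
theorem stmt5 {U : Type*} (E₁ E₂ : Set (U × U))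
    (h₁refl : ∀ u : U, (u, u) ∈ E₁)
    (h₁symm : ∀ u v : U, (u, v) ∈ E₁ → (v, u) ∈ E₁)
    (h₁trans : ∀ u v w : U, (u, v) ∈ E₁ → (v, w) ∈ E₁ → (u, w) ∈ E₁)
    (h₂refl : ∀ u : U, (u, u) ∈ E₂)
    (h₂symm : ∀ u v : U, (u, v) ∈ E₂ → (v, u) ∈ E₂)
    (h₂trans : ∀ u v w : U, (u, v) ∈ E₂ → (v, w) ∈ E₂ → (u, w) ∈ E₂)
    (hunion : E₁ ∪ E₂ = Set.univ) :
    E₁ = Set.univ ∨ E₂ = Set.univ := by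
  by_contra hcon
  push_neg at hcon
  obtain ⟨h1, h2⟩ := hcon
  rw [Set.ne_univ_iff_exists_notMem] at h1 h2
  obtain ⟨⟨a, b⟩, hab⟩ := h1
  obtain ⟨⟨c, d⟩, hcd⟩ := h2
  have hmem : ∀ p : U × U, p ∈ E₁ ∨ p ∈ E₂ := by
    intro p
    have : p ∈ E₁ ∪ E₂ := by rw [hunion]; trivial
    exact this
  -- (a,b) ∈ E₂ and (c,d) ∈ E₁
  have hab2 : (a, b) ∈ E₂ := (hmem (a, b)).resolve_left hab
  have hcd1 : (c, d) ∈ E₁ := (hmem (c, d)).resolve_right hcd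
  -- (a,c) ∈ E₂
  have hac2 : (a, c) ∈ E₂ := by
    rcases hmem (a, c) with h | h
    · rcases hmem (b, c) with h' | h'
      · exact absurd (h₁trans a c b h (h₁symm b c h')) hab
      · exact h₂trans a c c (h₂trans a b c hab2 h') (h₂refl c)
    · exact h
  -- (a,d) ∈ E₁  (else (c,d) ∈ E₂)
  have had1 : (a, d) ∈ E₁ := by
    rcases hmem (a, d) with h | h
    · exact h
    · exact absurd (h₂trans c a d (h₂symm a c hac2) h) hcd
  -- (b,d) ∈ E₁  (else (c,d) ∈ E₂ via b)
  have hbd1 : (b, d) ∈ E₁ := by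
    rcases hmem (b, d) with h | h
    · exact h
    · exact absurd (h₂trans c b d (h₂trans c a b (h₂symm a c hac2) hab2) h) hcd
  exact hab (h₁trans a d b had1 (h₁symm b d hbd1))
end

section
/- (Structure of mutual information sets) For partitions π and σ of U, dit(π) ∩ dit(σ) = ⋃_{B∈π, C∈σ} (B − C) × (C − B), and this union is disjoint over pairs (B,C). -/
open Finset

variable {U : Type*} [DecidableEq U] [Fintype U]

/- A mutual distinction `(x, y)` lies in `(B \ C) ×ˢ (C \ B)` for `B` the block of `π` containing `x`
and `C` the block of `σ` containing `y`. These products are disjoint because they sit inside the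
products `B ×ˢ C`, which are disjoint for distinct pairs of blocks. -/

theorem mem_dit_iff_of_mem_parts {π : Finpartition (univ : Finset U)} {B : Finset U}
    (hB : B ∈ π.parts) {x : U} (hx : x ∈ B) (y : U) : (x, y) ∈ dit π ↔ y ∉ B := by
  simp only [dit, mem_filter, mem_univ, true_and, not_and]
  exact ⟨fun h => h B hB hx, fun hy B' hB' hx' => π.eq_of_mem_parts hB hB' hx hx' ▸ hy⟩

theorem mem_dit_comm {π : Finpartition (univ : Finset U)} {x y : U} :
    (x, y) ∈ dit π ↔ (y, x) ∈ dit π := by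
  simp only [dit, mem_filter, mem_univ, true_and, and_comm]

theorem dit_inter_dit_eq_biUnion (π σ : Finpartition (univ : Finset U)) :
    dit π ∩ dit σ =
      (π.parts ×ˢ σ.parts).biUnion (fun BC => (BC.1 \ BC.2) ×ˢ (BC.2 \ BC.1)) := by
  ext ⟨x, y⟩
  simp only [mem_inter, mem_biUnion, mem_product, mem_sdiff, Prod.exists]
  constructor
  · rintro ⟨hπ, hσ⟩
    have hB := π.part_mem.2 (mem_univ x)
    have hxB := π.mem_part (mem_univ x)
    have hC := σ.part_mem.2 (mem_univ y)
    have hyC := σ.mem_part (mem_univ y)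
    exact ⟨_, _, ⟨hB, hC⟩, ⟨hxB, (mem_dit_iff_of_mem_parts hC hyC x).1 (mem_dit_comm.1 hσ)⟩,
      hyC, (mem_dit_iff_of_mem_parts hB hxB y).1 hπ⟩
  · rintro ⟨B, C, ⟨hB, hC⟩, ⟨hxB, hxC⟩, hyC, hyB⟩
    exact ⟨(mem_dit_iff_of_mem_parts hB hxB y).2 hyB,
      mem_dit_comm.2 ((mem_dit_iff_of_mem_parts hC hyC x).2 hxC)⟩

theorem Finpartition.disjoint_product_of_mem_parts_product {α β : Type*} [DecidableEq α]
    [DecidableEq β] {s : Finset α} {t : Finset β} (P : Finpartition s) (Q : Finpartition t)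
    {BC BC' : Finset α × Finset β} (h : BC ∈ P.parts ×ˢ Q.parts) (h' : BC' ∈ P.parts ×ˢ Q.parts)
    (hne : BC ≠ BC') : Disjoint (BC.1 ×ˢ BC.2) (BC'.1 ×ˢ BC'.2) := by
  rw [mem_product] at h h'
  rw [disjoint_product]
  by_cases h₁ : BC.1 = BC'.1
  · exact .inr (Q.disjoint h.2 h'.2 fun h₂ => hne (Prod.ext h₁ h₂))
  · exact .inl (P.disjoint h.1 h'.1 h₁)

theorem stmt6 (π σ : Finpartition (univ : Finset U)) :
    dit π ∩ dit σ =
      (π.parts ×ˢ σ.parts).biUnion (fun BC => (BC.1 \ BC.2) ×ˢ (BC.2 \ BC.1)) ∧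
    ∀ BC ∈ π.parts ×ˢ σ.parts, ∀ BC' ∈ π.parts ×ˢ σ.parts, BC ≠ BC' →
      Disjoint ((BC.1 \ BC.2) ×ˢ (BC.2 \ BC.1)) ((BC'.1 \ BC'.2) ×ˢ (BC'.2 \ BC'.1)) :=
  ⟨dit_inter_dit_eq_biUnion π σ, fun _ h _ h' hne =>
    (π.disjoint_product_of_mem_parts_product σ h h' hne).mono
      (product_subset_product sdiff_subset sdiff_subset)
      (product_subset_product sdiff_subset sdiff_subset)⟩
end

section
/- (Inclusion–exclusion for logical entropies) For partitions π and σ of a finite set U, m(π,σ) = h(π) + h(σ) − h(π ∨ σ), where m(π,σ) = |dit(π) ∩ dit(σ)|/|U|², h(τ) = |dit(τ)|/|U|², and π ∨ σ is the common refinement. -/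
open Finset

variable {U : Type*} [DecidableEq U] [Fintype U]

lemma dit_inf (π σ : Finpartition (univ : Finset U)) :
    dit (π ⊓ σ) = dit π ∪ dit σ := by
  ext p
  simp only [dit, mem_union, mem_filter, mem_univ, true_and, Finpartition.parts_inf,
    mem_erase, mem_image, mem_product, Prod.exists, not_and]
  constructor
  · intro h
    by_contra hc
    push_neg at hc
    obtain ⟨⟨B, hB, h1B, h2B⟩, ⟨C, hC, h1C, h2C⟩⟩ := hc
    refine h (B ⊓ C) ⟨?_, B, C, ⟨hB, hC⟩, rfl⟩
      (Finset.mem_inter.2 ⟨h1B, h1C⟩) (Finset.mem_inter.2 ⟨h2B, h2C⟩)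
    intro hbot
    have : p.1 ∈ B ⊓ C := Finset.mem_inter.2 ⟨h1B, h1C⟩
    rw [hbot] at this
    exact Finset.notMem_empty _ this
  · rintro (h | h) D ⟨hne, B, C, ⟨hB, hC⟩, rfl⟩ h1 h2
    · exact h B hB (Finset.mem_inter.1 h1).1 (Finset.mem_inter.1 h2).1
    · exact h C hC (Finset.mem_inter.1 h1).2 (Finset.mem_inter.1 h2).2

theorem stmt7 [Nonempty U] (π σ : Finpartition (univ : Finset U)) :
    ((dit π ∩ dit σ).card : ℝ) / (Fintype.card U : ℝ) ^ 2 =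
      ((dit π).card : ℝ) / (Fintype.card U : ℝ) ^ 2
      + ((dit σ).card : ℝ) / (Fintype.card U : ℝ) ^ 2
      - ((dit (π ⊓ σ)).card : ℝ) / (Fintype.card U : ℝ) ^ 2 := by
  rw [dit_inf]
  have h := Finset.card_inter_add_card_union (dit π) (dit σ)
  field_simp
  have h' : ((dit π ∩ dit σ).card : ℝ) + (dit π ∪ dit σ).card = (dit π).card + (dit σ).card := by exact_mod_cast congrArg (Nat.cast (R:=ℝ)) h
  linarith
end

section
/- (Independent partitions have independent dit sets) If partitions π and σ of a finite set U are stochastically independent, i.e., |B∩C|·|U| = |B|·|C| for all B ∈ π, C ∈ σ, then |dit(π) ∩ dit(σ)|·|U|² = |dit(π)|·|dit(σ)|; equivalently m(π,σ) = h(π)·h(σ). -/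
/-! Let `indit τ = dit τᶜ` be the set of pairs lying in a common block of `τ`. Then
`|indit π| = ∑ |B|²` and `|indit π ∩ indit σ| = ∑ |B ∩ C|²`, so independence, squared and summed
over blocks, says that `indit π` and `indit σ` are independent events in `U × U`. Complements
of independent events are independent, which is the claim for the dit sets. -/

open Finset

variable {U : Type*} [DecidableEq U] [Fintype U]

lemma Set.PairwiseDisjoint.prod_inter {ι κ α : Type*} [DecidableEq α] {s : Set ι} {t : Set κ}
    {f : ι → Finset α} {g : κ → Finset α} (hf : s.PairwiseDisjoint f)
    (hg : t.PairwiseDisjoint g) : (s ×ˢ t).PairwiseDisjoint fun p => f p.1 ∩ g p.2 := by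
  rintro ⟨i, k⟩ ⟨hi, hk⟩ ⟨j, l⟩ ⟨hj, hl⟩ hne
  show Disjoint (f i ∩ g k) (f j ∩ g l)
  by_cases hij : i = j
  · subst hij
    have hkl : k ≠ l := fun h => hne (by rw [h])
    exact (hg hk hl hkl).mono Finset.inter_subset_right Finset.inter_subset_right
  · exact (hf hi hj hij).mono Finset.inter_subset_left Finset.inter_subset_left

lemma Finset.card_biUnion_product_self {ι α : Type*} [DecidableEq α] {s : Finset ι}
    {f : ι → Finset α} (hf : (s : Set ι).PairwiseDisjoint f) :
    #(s.biUnion fun i => f i ×ˢ f i) = ∑ i ∈ s, #(f i) ^ 2 := by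
  rw [card_biUnion fun i hi j hj hij => disjoint_product.2 (.inl (hf hi hj hij))]
  simp only [card_product, sq]

lemma Finset.card_compl_inter_compl_mul_card {α : Type*} [Fintype α] [DecidableEq α]
    {s t : Finset α} (h : #(s ∩ t) * Fintype.card α = #s * #t) :
    #(sᶜ ∩ tᶜ) * Fintype.card α = #sᶜ * #tᶜ := by
  have hunion := card_union_add_card_inter s t
  have hcompl := card_compl_add_card (s ∪ t)
  rw [compl_union] at hcompl
  have hs := card_compl_add_card s
  have ht := card_compl_add_card t
  zify at *
  linear_combination (Fintype.card α : ℤ) * hcompl - (Fintype.card α : ℤ) * hunion + h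
    - (#tᶜ : ℤ) * hs - ((Fintype.card α : ℤ) - #s) * ht

lemma div_eq_div_mul_div_of_mul_eq {K : Type*} [Field K] {a b c N : K} (h : c * N = a * b) :
    c / N = a / N * (b / N) := by
  rcases eq_or_ne N 0 with rfl | hN
  · simp
  · field_simp
    exact h

def indit (π : Finpartition (univ : Finset U)) : Finset (U × U) :=
  π.parts.biUnion fun B => B ×ˢ B

lemma compl_indit (π : Finpartition (univ : Finset U)) : (indit π)ᶜ = dit π := by
  ext p
  simp [dit, indit]

lemma card_indit (π : Finpartition (univ : Finset U)) :
    #(indit π) = ∑ B ∈ π.parts, #B ^ 2 :=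
  card_biUnion_product_self π.disjoint

lemma card_indit_inter_indit (π σ : Finpartition (univ : Finset U)) :
    #(indit π ∩ indit σ) = ∑ BC ∈ π.parts ×ˢ σ.parts, #(BC.1 ∩ BC.2) ^ 2 := by
  rw [← card_biUnion_product_self (f := fun BC : Finset U × Finset U => BC.1 ∩ BC.2)
    (by rw [coe_product]; exact π.disjoint.prod_inter σ.disjoint)]
  congr 1
  ext ⟨a, b⟩
  simp only [indit, mem_inter, mem_biUnion, mem_product, Prod.exists]
  constructor
  · rintro ⟨⟨B, hB, haB, hbB⟩, ⟨C, hC, haC, hbC⟩⟩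
    exact ⟨B, C, ⟨hB, hC⟩, ⟨haB, haC⟩, ⟨hbB, hbC⟩⟩
  · rintro ⟨B, C, ⟨hB, hC⟩, haBC, hbBC⟩
    exact ⟨⟨B, hB, haBC.1, hbBC.1⟩, ⟨C, hC, haBC.2, hbBC.2⟩⟩

lemma card_indit_inter_indit_mul_of_indep {π σ : Finpartition (univ : Finset U)}
    (hind : ∀ B ∈ π.parts, ∀ C ∈ σ.parts, #(B ∩ C) * Fintype.card U = #B * #C) :
    #(indit π ∩ indit σ) * Fintype.card (U × U) = #(indit π) * #(indit σ) := by
  rw [card_indit_inter_indit, card_indit, card_indit, sum_mul_sum, ← sum_product',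
    Fintype.card_prod, sum_mul]
  refine sum_congr rfl fun BC hBC => ?_
  rw [mem_product] at hBC
  rw [← mul_pow, ← hind _ hBC.1 _ hBC.2]
  ring

theorem stmt8_general (π σ : Finpartition (univ : Finset U))
    (hind : ∀ B ∈ π.parts, ∀ C ∈ σ.parts,
      (B ∩ C).card * Fintype.card U = B.card * C.card) :
    (dit π ∩ dit σ).card * (Fintype.card U) ^ 2 = (dit π).card * (dit σ).card ∧
    ((dit π ∩ dit σ).card : ℝ) / (Fintype.card U : ℝ) ^ 2 =
      (((dit π).card : ℝ) / (Fintype.card U : ℝ) ^ 2) *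
      (((dit σ).card : ℝ) / (Fintype.card U : ℝ) ^ 2) := by
  have hdit : #(dit π ∩ dit σ) * Fintype.card U ^ 2 = #(dit π) * #(dit σ) := by
    rw [← compl_indit, ← compl_indit, sq, ← Fintype.card_prod]
    exact card_compl_inter_compl_mul_card (card_indit_inter_indit_mul_of_indep hind)
  exact ⟨hdit, div_eq_div_mul_div_of_mul_eq (by exact_mod_cast hdit)⟩

theorem stmt8 [Nonempty U] (π σ : Finpartition (univ : Finset U))
    (hind : ∀ B ∈ π.parts, ∀ C ∈ σ.parts,
      (B ∩ C).card * Fintype.card U = B.card * C.card) :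
    (dit π ∩ dit σ).card * (Fintype.card U) ^ 2 = (dit π).card * (dit σ).card ∧
    ((dit π ∩ dit σ).card : ℝ) / (Fintype.card U : ℝ) ^ 2 =
      (((dit π).card : ℝ) / (Fintype.card U : ℝ) ^ 2) *
      (((dit σ).card : ℝ) / (Fintype.card U : ℝ) ^ 2) :=
  stmt8_general π σ hind
end

section
/- If a joint distribution on X × Y is independent, i.e., p(x,y) = p(x)p(y) for all x, y, then the logical mutual information factors: m(x,y) = h(x)·h(y). -/
/-! Expanding the summand, `m(x,y) = 1 - Σ p(x)² - Σ p(y)² + Σ p(x,y)²`, and independence makes the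
last sum factor as `Σ p(x)² · Σ p(y)²`; the right-hand side expands to the same polynomial. -/

open Finset

section Marginals

variable {X Y R : Type*} [Fintype X] [Fintype Y] [CommSemiring R]

theorem sum_mul_sum_fst_eq_sum_sq (p : X × Y → R) :
    ∑ z : X × Y, p z * ∑ y, p (z.1, y) = ∑ x, (∑ y, p (x, y)) ^ 2 := by
  simp only [Fintype.sum_prod_type, ← sum_mul, sq]

theorem sum_mul_sum_snd_eq_sum_sq (p : X × Y → R) :
    ∑ z : X × Y, p z * ∑ x, p (x, z.2) = ∑ y, (∑ x, p (x, y)) ^ 2 := by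
  simp only [Fintype.sum_prod_type_right, ← sum_mul, sq]

theorem sum_sq_eq_mul_of_eq_mul (p : X × Y → R) (a : X → R) (b : Y → R)
    (h : ∀ x y, p (x, y) = a x * b y) :
    ∑ z : X × Y, p z ^ 2 = (∑ x, a x ^ 2) * ∑ y, b y ^ 2 := by
  simp only [Fintype.sum_prod_type, h, mul_pow, sum_mul_sum]

end Marginals

theorem stmt14_general {X Y : Type*} [Fintype X] [Fintype Y] (p : X × Y → ℝ)
    (hsum : ∑ z, p z = 1)
    (hind : ∀ x y, p (x, y) = (∑ y', p (x, y')) * (∑ x', p (x', y))) :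
    ∑ z : X × Y, p z *
        ((1 - ∑ y, p (z.1, y)) + (1 - ∑ x, p (x, z.2)) - (1 - p z)) =
      (1 - ∑ x, (∑ y, p (x, y)) ^ 2) * (1 - ∑ y, (∑ x, p (x, y)) ^ 2) := by
  have hexpand : ∀ z : X × Y,
      p z * ((1 - ∑ y, p (z.1, y)) + (1 - ∑ x, p (x, z.2)) - (1 - p z)) =
        p z - p z * ∑ y, p (z.1, y) - p z * ∑ x, p (x, z.2) + p z ^ 2 := fun z => by ring
  simp only [hexpand, sum_add_distrib, sum_sub_distrib, hsum, sum_mul_sum_fst_eq_sum_sq,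
    sum_mul_sum_snd_eq_sum_sq, sum_sq_eq_mul_of_eq_mul p _ _ hind]
  ring

theorem stmt14 {X Y : Type*} [Fintype X] [Fintype Y] (p : X × Y → ℝ)
    (hpos : ∀ z, 0 ≤ p z) (hsum : ∑ z, p z = 1)
    (hind : ∀ x y, p (x, y) = (∑ y', p (x, y')) * (∑ x', p (x', y))) :
    ∑ z : X × Y, p z *
        ((1 - ∑ y, p (z.1, y)) + (1 - ∑ x, p (x, z.2)) - (1 - p z)) =
      (1 - ∑ x, (∑ y, p (x, y)) ^ 2) * (1 - ∑ y, (∑ x, p (x, y)) ^ 2) :=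
  stmt14_general p hsum hind
end
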